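/- Let 𝔅 be a bornology with closed base on a metric space X. Then X satisfies S₁(𝒪_{𝔅ˢ}, Γ_{𝔅ˢ}) if and only if X satisfies S_fin(𝒪_{𝔅ˢ}, Γ_{𝔅ˢ}). -/

import Mathlib

open Set Metric Filter

/-- A bornology on a metric space: an ideal of subsets covering `X`. -/
structure BornologyOn (X : Type*) [MetricSpace X] where
  sets : Set (Set X)
  union_mem : ∀ {A B : Set X}, A ∈ sets → B ∈ sets → A ∪ B ∈ sets
  subset_mem : ∀ {A B : Set X}, A ∈ sets → B ⊆ A → B ∈ sets
  covers : ∀ x : X, ∃ A ∈ sets, x ∈ A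

variable {X : Type*} [MetricSpace X]

/-- `𝔅` has a closed base: a cofinal subfamily consisting of closed sets. -/
def HasClosedBase (𝔅 : BornologyOn X) : Prop :=
  ∃ base ⊆ 𝔅.sets, (∀ C ∈ base, IsClosed C) ∧ ∀ A ∈ 𝔅.sets, ∃ C ∈ base, A ⊆ C

/-- The `δ`-enlargement `B^δ = ⋃_{x ∈ B} S(x, δ)`. -/
def enlarge (B : Set X) (δ : ℝ) : Set X := ⋃ x ∈ B, ball x δ

/-- A `𝔅ˢ`-cover: `X ∉ 𝒰` and every `B ∈ 𝔅` has `B^δ ⊆ U` for some `U ∈ 𝒰`, `δ > 0`. -/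
def IsBCover (𝔅 : BornologyOn X) (𝒰 : Set (Set X)) : Prop :=
  univ ∉ 𝒰 ∧ ∀ B ∈ 𝔅.sets, ∃ U ∈ 𝒰, ∃ δ > 0, enlarge B δ ⊆ U

/-- An open `𝔅ˢ`-cover. -/
def IsOpenBCover (𝔅 : BornologyOn X) (𝒰 : Set (Set X)) : Prop :=
  (∀ U ∈ 𝒰, IsOpen U) ∧ (∀ x : X, ∃ U ∈ 𝒰, x ∈ U) ∧ IsBCover 𝔅 𝒰

/-- A `γ_{𝔅ˢ}`-cover (set form): infinite family of open sets such that for each `B ∈ 𝔅`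
all but finitely many members contain some enlargement of `B`. -/
def IsGammaBCover (𝔅 : BornologyOn X) (𝒰 : Set (Set X)) : Prop :=
  𝒰.Infinite ∧ (∀ U ∈ 𝒰, IsOpen U) ∧
    ∀ B ∈ 𝔅.sets, {U ∈ 𝒰 | ¬ ∃ δ > 0, enlarge B δ ⊆ U}.Finite

/-- A `γ_{𝔅ˢ}`-cover given as a sequence `{Uₙ}`: infinite, open, and for each `B ∈ 𝔅`
there are `n₀` and `δₙ > 0` with `B^{δₙ} ⊆ Uₙ` for all `n ≥ n₀`. -/
def IsGammaBSeq (𝔅 : BornologyOn X) (U : ℕ → Set X) : Prop :=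
  (Set.range U).Infinite ∧ (∀ n, IsOpen (U n)) ∧
    ∀ B ∈ 𝔅.sets, ∃ n₀, ∀ n ≥ n₀, ∃ δ > 0, enlarge B δ ⊆ U n

/-- A `γ`-cover: infinite family of open sets, every point in all but finitely many members. -/
def IsGammaCover (𝒰 : Set (Set X)) : Prop :=
  𝒰.Infinite ∧ (∀ U ∈ 𝒰, IsOpen U) ∧ ∀ x : X, {U ∈ 𝒰 | x ∉ U}.Finite

/-- An open cover of `X`. -/
def IsOpenCover (𝒰 : Set (Set X)) : Prop :=
  (∀ U ∈ 𝒰, IsOpen U) ∧ ∀ x : X, ∃ U ∈ 𝒰, x ∈ U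

/-- The family `𝒪_{𝔅ˢ}` of countable open `𝔅ˢ`-covers. -/
def OBs (𝔅 : BornologyOn X) : Set (Set (Set X)) :=
  {𝒰 | 𝒰.Countable ∧ IsOpenBCover 𝔅 𝒰}

/-- The family `Γ_{𝔅ˢ}` of countable `γ_{𝔅ˢ}`-covers. -/
def GBs (𝔅 : BornologyOn X) : Set (Set (Set X)) :=
  {𝒰 | 𝒰.Countable ∧ IsGammaBCover 𝔅 𝒰}

/-- The family `𝒪` of countable open covers. -/
def Ocov (X : Type*) [MetricSpace X] : Set (Set (Set X)) :=
  {𝒰 | 𝒰.Countable ∧ IsOpenCover 𝒰}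

/-- The selection principle `S₁(𝒜, ℬ)`. -/
def S1 (𝒜 ℬ : Set (Set (Set X))) : Prop :=
  ∀ 𝒰 : ℕ → Set (Set X), (∀ n, 𝒰 n ∈ 𝒜) →
    ∃ sel : ℕ → Set X, (∀ n, sel n ∈ 𝒰 n) ∧ Set.range sel ∈ ℬ

/-- The selection principle `S_fin(𝒜, ℬ)`. -/
def Sfin (𝒜 ℬ : Set (Set (Set X))) : Prop :=
  ∀ 𝒰 : ℕ → Set (Set X), (∀ n, 𝒰 n ∈ 𝒜) →
    ∃ 𝒱 : ℕ → Set (Set X), (∀ n, 𝒱 n ⊆ 𝒰 n ∧ (𝒱 n).Finite) ∧ (⋃ n, 𝒱 n) ∈ ℬ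

/-- The selection principle `U_fin(𝒜, ℬ)`. -/
def Ufin (𝒜 ℬ : Set (Set (Set X))) : Prop :=
  ∀ 𝒰 : ℕ → Set (Set X), (∀ n, 𝒰 n ∈ 𝒜) →
    ∃ 𝒱 : ℕ → Set (Set X), (∀ n, 𝒱 n ⊆ 𝒰 n ∧ (𝒱 n).Finite) ∧
      ((Set.range fun n => ⋃₀ 𝒱 n) ∈ ℬ ∨ ∃ n, ⋃₀ 𝒱 n = univ)

/-- ONE has a winning strategy in `G₁(𝒜, ℬ)`. -/
def OneWinsG1 (𝒜 ℬ : Set (Set (Set X))) : Prop :=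
  ∃ σ : List (Set X) → Set (Set X),
    (∀ h, σ h ∈ 𝒜) ∧
    ∀ play : ℕ → Set X,
      (∀ n, play n ∈ σ (List.ofFn fun i : Fin n => play i.1)) →
      Set.range play ∉ ℬ

/-- ONE has a winning strategy in `G_fin(𝒜, ℬ)`. -/
def OneWinsGfin (𝒜 ℬ : Set (Set (Set X))) : Prop :=
  ∃ σ : List (Set (Set X)) → Set (Set X),
    (∀ h, σ h ∈ 𝒜) ∧
    ∀ play : ℕ → Set (Set X),
      (∀ n, play n ⊆ σ (List.ofFn fun i : Fin n => play i.1) ∧ (play n).Finite) →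
      (⋃ n, play n) ∉ ℬ

/-- The winning condition in the `𝔅ˢ`-Hurewicz game / property: every `B ∈ 𝔅` is
eventually `δ`-enlarged into some member of `𝒱ₙ`. -/
def HurSel (𝔅 : BornologyOn X) (𝒱 : ℕ → Set (Set X)) : Prop :=
  ∀ B ∈ 𝔅.sets, ∃ n₀, ∀ n ≥ n₀, ∃ δ > 0, ∃ U ∈ 𝒱 n, enlarge B δ ⊆ U

/-- The strong `𝔅`-Hurewicz property. -/
def BsHurewicz (𝔅 : BornologyOn X) : Prop :=
  ∀ 𝒰 : ℕ → Set (Set X), (∀ n, 𝒰 n ∈ OBs 𝔅) →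
    ∃ 𝒱 : ℕ → Set (Set X), (∀ n, 𝒱 n ⊆ 𝒰 n ∧ (𝒱 n).Finite) ∧ HurSel 𝔅 𝒱

/-- ONE has a winning strategy in the `𝔅ˢ`-Hurewicz game. -/
def OneWinsHurewicz (𝔅 : BornologyOn X) : Prop :=
  ∃ σ : List (Set (Set X)) → Set (Set X),
    (∀ h, σ h ∈ OBs 𝔅) ∧
    ∀ play : ℕ → Set (Set X),
      (∀ n, play n ⊆ σ (List.ofFn fun i : Fin n => play i.1) ∧ (play n).Finite) →
      ¬ HurSel 𝔅 play

/-- A `𝔅ˢ`-groupable cover. -/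
def BsGroupable (𝔅 : BornologyOn X) (𝒰 : Set (Set X)) : Prop :=
  ∃ 𝒢 : ℕ → Set (Set X), (∀ n, (𝒢 n).Finite) ∧
    (∀ m n, m ≠ n → Disjoint (𝒢 m) (𝒢 n)) ∧ (⋃ n, 𝒢 n) = 𝒰 ∧ HurSel 𝔅 𝒢

/-- The family `𝒪_{𝔅ˢ}^{gp}` of `𝔅ˢ`-groupable open covers. -/
def OBsgp (𝔅 : BornologyOn X) : Set (Set (Set X)) :=
  {𝒰 | IsOpenCover 𝒰 ∧ BsGroupable 𝔅 𝒰}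

/-- The basic `τ_𝔅ˢ` neighbourhood `[B, ε]ˢ(f)` in `C(X)`. -/
def sball (f : C(X, ℝ)) (B : Set X) (ε : ℝ) : Set C(X, ℝ) :=
  {g | ∃ δ > 0, ∀ x ∈ enlarge B δ, |f x - g x| < ε}

/-- The topology `τ_𝔅ˢ` of strong uniform convergence on `𝔅` on `C(X)`. -/
def tauBs (𝔅 : BornologyOn X) : TopologicalSpace C(X, ℝ) :=
  TopologicalSpace.generateFrom
    {S | ∃ f : C(X, ℝ), ∃ B ∈ 𝔅.sets, ∃ ε > 0, S = sball f B ε}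

/-- Countable `T`-tightness of a topological space. -/
def CountableTTightness {Y : Type*} (t : TopologicalSpace Y) : Prop :=
  ∀ ρ : Cardinal.{0}, ρ.IsRegular → Cardinal.aleph0 < ρ →
    ∀ A : Ordinal.{0} → Set Y, (∀ α β, α ≤ β → A α ⊆ A β) →
      (∀ α, α < ρ.ord → @IsClosed _ t (A α)) →
      @IsClosed _ t (⋃ α ∈ {α | α < ρ.ord}, A α)

/-!
Given covers `𝒰 n ∈ 𝒪_{𝔅ˢ}`, apply `S_fin` to the covers by meets `U₀ ∩ ⋯ ∩ Uₘ` (`Uᵢ ∈ 𝒰 i`),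
which are again in `𝒪_{𝔅ˢ}`. The selected `γ_{𝔅ˢ}`-cover is a union of finite levels, so from
level `≥ n` one can pick a member `Aₙ` not occurring in earlier levels; such a sequence eventually
avoids every finite subfamily, in particular the finitely many members into which a given `B ∈ 𝔅`
is not enlarged. Selecting from `𝒰 n` the factor of `Aₙ` gives a `γ_{𝔅ˢ}`-cover.
-/

theorem enlarge_mono (B : Set X) {δ δ' : ℝ} (h : δ ≤ δ') : enlarge B δ ⊆ enlarge B δ' :=
  iUnion₂_mono fun _ _ => ball_subset_ball h

theorem subset_enlarge {B : Set X} {δ : ℝ} (hδ : 0 < δ) : B ⊆ enlarge B δ :=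
  fun _ hx => mem_biUnion hx (mem_ball_self hδ)

theorem BornologyOn.finite_mem (𝔅 : BornologyOn X) {S : Set X} (hS : S.Finite)
    (hne : S.Nonempty) : S ∈ 𝔅.sets := by
  induction S, hS using Set.Finite.induction_on with
  | empty => exact absurd hne not_nonempty_empty
  | @insert a s _ _ ih =>
    obtain ⟨C, hC, haC⟩ := 𝔅.covers a
    have ha : {a} ∈ 𝔅.sets := 𝔅.subset_mem hC (singleton_subset_iff.2 haC)
    rcases s.eq_empty_or_nonempty with rfl | hs
    · simpa using ha
    · rw [insert_eq]
      exact 𝔅.union_mem ha (ih hs)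

theorem image2_inter_mem_OBs {𝔅 : BornologyOn X} {𝒰 𝒱 : Set (Set X)} (h𝒰 : 𝒰 ∈ OBs 𝔅)
    (h𝒱 : 𝒱 ∈ OBs 𝔅) : image2 (· ∩ ·) 𝒰 𝒱 ∈ OBs 𝔅 := by
  obtain ⟨h𝒰c, h𝒰o, h𝒰x, h𝒰univ, h𝒰B⟩ := h𝒰
  obtain ⟨h𝒱c, h𝒱o, h𝒱x, -, h𝒱B⟩ := h𝒱
  refine ⟨h𝒰c.image2 h𝒱c _, ?_, fun x => ?_, ?_, fun B hB => ?_⟩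
  · rintro _ ⟨U, hU, V, hV, rfl⟩
    exact (h𝒰o U hU).inter (h𝒱o V hV)
  · obtain ⟨U, hU, hxU⟩ := h𝒰x x
    obtain ⟨V, hV, hxV⟩ := h𝒱x x
    exact ⟨U ∩ V, mem_image2_of_mem hU hV, hxU, hxV⟩
  · rintro ⟨U, hU, V, -, hUV⟩
    have hU_univ : U = univ := (inf_eq_top_iff.1 hUV).1
    exact h𝒰univ (hU_univ ▸ hU)
  · obtain ⟨U, hU, δ, hδ, hBU⟩ := h𝒰B B hB
    obtain ⟨V, hV, ε, hε, hBV⟩ := h𝒱B B hB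
    exact ⟨U ∩ V, mem_image2_of_mem hU hV, min δ ε, lt_min hδ hε,
      subset_inter ((enlarge_mono B (min_le_left δ ε)).trans hBU)
        ((enlarge_mono B (min_le_right δ ε)).trans hBV)⟩

def meetCover {α : Type*} (𝒰 : ℕ → Set (Set α)) : ℕ → Set (Set α)
  | 0 => 𝒰 0
  | m + 1 => image2 (· ∩ ·) (meetCover 𝒰 m) (𝒰 (m + 1))

theorem meetCover_mem_OBs {𝔅 : BornologyOn X} {𝒰 : ℕ → Set (Set X)} (h𝒰 : ∀ n, 𝒰 n ∈ OBs 𝔅)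
    (m : ℕ) : meetCover 𝒰 m ∈ OBs 𝔅 := by
  induction m with
  | zero => exact h𝒰 0
  | succ m ih => exact image2_inter_mem_OBs ih (h𝒰 (m + 1))

theorem exists_superset_of_mem_meetCover {α : Type*} {𝒰 : ℕ → Set (Set α)} {m : ℕ}
    {U : Set α} (hU : U ∈ meetCover 𝒰 m) {i : ℕ} (hi : i ≤ m) : ∃ V ∈ 𝒰 i, U ⊆ V := by
  induction m generalizing U with
  | zero => exact ⟨U, Nat.le_zero.1 hi ▸ hU, subset_rfl⟩
  | succ m ih =>
    obtain ⟨U', hU', V, hV, rfl⟩ := hU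
    rcases hi.lt_or_eq with hi | rfl
    · obtain ⟨W, hW, hU'W⟩ := ih hU' (Nat.le_of_lt_succ hi)
      exact ⟨W, hW, inter_subset_left.trans hU'W⟩
    · exact ⟨V, hV, inter_subset_right⟩

theorem exists_seq_mem_iUnion_forall_lt_notMem {α : Type*} {𝒱 : ℕ → Set α}
    (hfin : ∀ n, (𝒱 n).Finite) (hinf : (⋃ n, 𝒱 n).Infinite) :
    ∃ A : ℕ → α, ∀ i, A i ∈ ⋃ n, 𝒱 n ∧ ∀ k < i, A i ∉ 𝒱 k := by
  have hnew : ∀ i, ((⋃ n, 𝒱 n) \ ⋃ k ∈ {k | k < i}, 𝒱 k).Nonempty := fun i =>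
    (hinf.sdiff ((finite_lt_nat i).biUnion fun k _ => hfin k)).nonempty
  choose A hA using hnew
  exact ⟨A, fun i => ⟨(hA i).1, fun k hk hAk => (hA i).2 (mem_biUnion hk hAk)⟩⟩

theorem eventually_notMem_of_forall_lt_notMem {α : Type*} {𝒱 : ℕ → Set α} {A : ℕ → α}
    (hA : ∀ i, ∀ k < i, A i ∉ 𝒱 k) {F : Set α} (hF : F.Finite) (hF𝒱 : F ⊆ ⋃ n, 𝒱 n) :
    ∀ᶠ i in atTop, A i ∉ F := by
  have hne : ∀ U ∈ F, ∀ᶠ i in atTop, A i ≠ U := fun U hU => by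
    obtain ⟨k, hk⟩ := mem_iUnion.1 (hF𝒱 hU)
    filter_upwards [eventually_gt_atTop k] with i hi
    exact fun h => hA i k hi (h ▸ hk)
  filter_upwards [(eventually_all_finite hF).2 hne] with i hi hAF
  exact hi _ hAF rfl

theorem IsGammaBSeq.range_mem_GBs {𝔅 : BornologyOn X} {U : ℕ → Set X}
    (hU : IsGammaBSeq 𝔅 U) : range U ∈ GBs 𝔅 := by
  obtain ⟨hinf, hopen, hB⟩ := hU
  refine ⟨countable_range U, hinf, forall_mem_range.2 hopen, fun B hB' => ?_⟩
  obtain ⟨n₀, hn₀⟩ := hB B hB'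
  refine ((finite_lt_nat n₀).image U).subset ?_
  rintro _ ⟨⟨n, rfl⟩, hbad⟩
  exact ⟨n, not_le.1 fun hn => hbad (hn₀ n hn), rfl⟩

theorem isGammaBSeq_of_ne_univ {𝔅 : BornologyOn X} {U : ℕ → Set X}
    (hopen : ∀ n, IsOpen (U n)) (hne : ∀ n, U n ≠ univ)
    (hB : ∀ B ∈ 𝔅.sets, ∃ n₀, ∀ n ≥ n₀, ∃ δ > 0, enlarge B δ ⊆ U n) : IsGammaBSeq 𝔅 U := by
  refine ⟨fun hfin => ?_, hopen, hB⟩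
  -- a finite range gives a finite set meeting the complement of every `U n`
  have := hfin.to_subtype
  have hout : ∀ V : range U, ∃ x, x ∉ (V : Set X) := by
    rintro ⟨_, n, rfl⟩
    exact (ne_univ_iff_exists_notMem _).1 (hne n)
  choose q hq using hout
  have hq𝔅 : range q ∈ 𝔅.sets :=
    𝔅.finite_mem (finite_range q) (range_nonempty_iff_nonempty.2 ⟨⟨U 0, 0, rfl⟩⟩)
  obtain ⟨n₀, hn₀⟩ := hB _ hq𝔅
  obtain ⟨δ, hδ, hsub⟩ := hn₀ n₀ le_rfl
  exact hq ⟨U n₀, n₀, rfl⟩ (hsub (subset_enlarge hδ (mem_range_self _)))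

theorem S1.sfin {Y : Type*} {𝒜 ℬ : Set (Set (Set Y))} (h : S1 𝒜 ℬ) : Sfin 𝒜 ℬ := by
  intro 𝒰 h𝒰
  obtain ⟨sel, hsel, hmem⟩ := h 𝒰 h𝒰
  refine ⟨fun n => {sel n}, fun n => ⟨singleton_subset_iff.2 (hsel n), finite_singleton _⟩, ?_⟩
  rwa [iUnion_singleton_eq_range]

theorem Sfin.s1_OBs_GBs {𝔅 : BornologyOn X} (h : Sfin (OBs 𝔅) (GBs 𝔅)) :
    S1 (OBs 𝔅) (GBs 𝔅) := by
  intro 𝒰 h𝒰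
  obtain ⟨𝒱, h𝒱, -, hWinf, -, hWbad⟩ := h (meetCover 𝒰) (meetCover_mem_OBs h𝒰)
  obtain ⟨A, hA⟩ := exists_seq_mem_iUnion_forall_lt_notMem (fun n => (h𝒱 n).2) hWinf
  have hsuper : ∀ i, ∃ V ∈ 𝒰 i, A i ⊆ V := fun i => by
    obtain ⟨m, hm⟩ := mem_iUnion.1 (hA i).1
    exact exists_superset_of_mem_meetCover ((h𝒱 m).1 hm) (not_lt.1 fun hmi => (hA i).2 m hmi hm)
  choose sel hsel hAsel using hsuper
  refine ⟨sel, hsel, IsGammaBSeq.range_mem_GBs <| isGammaBSeq_of_ne_univ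
    (fun i => (h𝒰 i).2.1 _ (hsel i)) (fun i hi => (h𝒰 i).2.2.2.1 (hi ▸ hsel i)) fun B hB => ?_⟩
  obtain ⟨n₀, hn₀⟩ := eventually_atTop.1 <|
    eventually_notMem_of_forall_lt_notMem (fun i => (hA i).2) (hWbad B hB) (sep_subset _ _)
  refine ⟨n₀, fun n hn => ?_⟩
  obtain ⟨δ, hδ, hBA⟩ := not_not.1 fun hbad => hn₀ n hn ⟨(hA n).1, hbad⟩
  exact ⟨δ, hδ, hBA.trans (hAsel n)⟩

theorem stmt7_general (𝔅 : BornologyOn X) :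
    S1 (OBs 𝔅) (GBs 𝔅) ↔ Sfin (OBs 𝔅) (GBs 𝔅) :=
  ⟨S1.sfin, Sfin.s1_OBs_GBs⟩

theorem stmt7 (𝔅 : BornologyOn X) (hcb : HasClosedBase 𝔅) :
    S1 (OBs 𝔅) (GBs 𝔅) ↔ Sfin (OBs 𝔅) (GBs 𝔅) :=
  stmt7_general 𝔅
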